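/- Let N ≥ 1 and let Ω = Metric.ball x₀ R be an open ball in EuclideanSpace ℝ (Fin N) with R > 0. Then there exists a constant c > 0 such that for every φ : EuclideanSpace ℝ (Fin N) → ℝ that is C² on an open set containing the closure of Ω and vanishes at every point of the frontier of Ω, one has ∫_Ω φ(x)² dx ≤ c·∫_Ω (Δφ(x))² dx. -/

import Mathlib

/-!
Integrating by parts along every chord of the ball parallel to a coordinate axis gives the
Green identity `∑ᵢ ∫ (∂ᵢφ)² = -∫ φ Δφ`, and a one-dimensional Poincaré inequality on the chords
parallel to the first axis gives `∫ φ² ≤ 16 R² ∫ (∂₀φ)²`. Together `∫ φ² ≤ -∫ φ · (16 R² Δφ)`,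
and absorbing the right-hand side with `-ab ≤ a²/2 + b²/2` yields `∫ φ² ≤ (16 R²)² ∫ (Δφ)²`.
-/

open MeasureTheory

/-- The Laplacian `Δu(x) = ∑ i, ∂²u/∂xᵢ²(x)` of `u : ℝ^N → ℝ`. -/
noncomputable def lap {N : ℕ} (u : EuclideanSpace ℝ (Fin N) → ℝ)
    (x : EuclideanSpace ℝ (Fin N)) : ℝ :=
  ∑ i : Fin N, fderiv ℝ (fun y => fderiv ℝ u y (EuclideanSpace.single i 1)) x
    (EuclideanSpace.single i 1)

open Set

theorem integral_sq_le_of_le_neg_integral_mul {α : Type*} [MeasurableSpace α]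
    {μ : Measure α} {f h : α → ℝ} (hf : Integrable (fun x => f x ^ 2) μ)
    (hh : Integrable (fun x => h x ^ 2) μ) (H : ∫ x, f x ^ 2 ∂μ ≤ -∫ x, f x * h x ∂μ) :
    ∫ x, f x ^ 2 ∂μ ≤ ∫ x, h x ^ 2 ∂μ := by
  by_cases hfh : Integrable (fun x => f x * h x) μ
  · have hamgm : -∫ x, f x * h x ∂μ ≤ ∫ x, (f x ^ 2 / 2 + h x ^ 2 / 2) ∂μ := by
      rw [← integral_neg]
      exact integral_mono hfh.neg ((hf.div_const 2).add (hh.div_const 2)) fun x => by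
        nlinarith [sq_nonneg (f x + h x)]
    rw [integral_add (hf.div_const 2) (hh.div_const 2), integral_div, integral_div] at hamgm
    linarith
  · rw [integral_undef hfh, neg_zero] at H
    exact H.trans (integral_nonneg fun x => sq_nonneg _)

section Interval

variable {g g' g'' : ℝ → ℝ} {a b : ℝ}

theorem integral_mul_deriv_deriv_eq_neg_integral_sq (hab : a ≤ b)
    (hg : ∀ t ∈ Icc a b, HasDerivAt g (g' t) t) (hg' : ∀ t ∈ Icc a b, HasDerivAt g' (g'' t) t)
    (hg'' : ContinuousOn g'' (Icc a b)) (ha : g a = 0) (hb : g b = 0) :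
    ∫ t in a..b, g t * g'' t = -∫ t in a..b, g' t ^ 2 := by
  rw [← uIcc_of_le hab] at hg hg' hg''
  have hg'c : ContinuousOn g' (uIcc a b) := fun t ht =>
    (hg' t ht).continuousAt.continuousWithinAt
  rw [intervalIntegral.integral_mul_deriv_eq_deriv_mul hg hg' hg'c.intervalIntegrable
    hg''.intervalIntegrable, ha, hb]
  simp [sq]

theorem integral_sq_le_of_hasDerivAt (hab : a ≤ b) (hg : ∀ t ∈ Icc a b, HasDerivAt g (g' t) t)
    (hg' : ContinuousOn g' (Icc a b)) (hb : g b = 0) :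
    ∫ t in a..b, g t ^ 2 ≤ 4 * (b - a) ^ 2 * ∫ t in a..b, g' t ^ 2 := by
  have hgc : ContinuousOn g (Icc a b) := fun t ht => (hg t ht).continuousAt.continuousWithinAt
  have hwc : ContinuousOn (fun t => (2 * (t - a) * g' t) ^ 2) (Icc a b) := by fun_prop
  -- integrate `g²` against the derivative of `t ↦ t - a`: the boundary term `(b - a) g(b)²` is 0
  have hibp : ∫ t in a..b, g t ^ 2 = -∫ t in a..b, g t * (2 * (t - a) * g' t) := by
    have h := intervalIntegral.integral_mul_deriv_eq_deriv_mul (u := fun t => t - a)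
      (u' := fun _ => 1) (v := fun t => g t ^ 2) (v' := fun t => 2 * g t * g' t)
      (fun t _ => (hasDerivAt_id t).sub_const a)
      (fun t ht => by simpa [mul_comm] using (hg t (uIcc_of_le hab ▸ ht)).fun_pow 2)
      intervalIntegrable_const
      (((continuousOn_const.mul hgc).mul hg').intervalIntegrable_of_Icc hab)
    have hint : ∫ t in a..b, g t * (2 * (t - a) * g' t) =
        ∫ t in a..b, (t - a) * (2 * g t * g' t) :=
      intervalIntegral.integral_congr fun t _ => by ring
    norm_num [hb] at h
    linarith
  have hsq : ∫ t in a..b, g t ^ 2 ≤ ∫ t in a..b, (2 * (t - a) * g' t) ^ 2 := by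
    simp only [intervalIntegral.integral_of_le hab] at hibp ⊢
    exact integral_sq_le_of_le_neg_integral_mul
      ((hgc.pow 2).integrableOn_Icc.mono_set Ioc_subset_Icc_self)
      (hwc.integrableOn_Icc.mono_set Ioc_subset_Icc_self) hibp.le
  calc ∫ t in a..b, g t ^ 2 ≤ ∫ t in a..b, (2 * (t - a) * g' t) ^ 2 := hsq
    _ ≤ ∫ t in a..b, 4 * (b - a) ^ 2 * g' t ^ 2 := by
      refine intervalIntegral.integral_mono_on hab (hwc.intervalIntegrable_of_Icc hab)
        ((continuousOn_const.mul (hg'.pow 2)).intervalIntegrable_of_Icc hab) fun t ht => ?_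
      have : (t - a) ^ 2 ≤ (b - a) ^ 2 := by nlinarith [ht.1, ht.2]
      nlinarith [sq_nonneg (g' t)]
    _ = 4 * (b - a) ^ 2 * ∫ t in a..b, g' t ^ 2 := intervalIntegral.integral_const_mul _ _

end Interval

section Chord

variable {n : ℕ}

noncomputable def insertCoord (i : Fin (n + 1)) (t : ℝ) (y : Fin n → ℝ) :
    EuclideanSpace ℝ (Fin (n + 1)) :=
  WithLp.toLp 2 (Fin.insertNth i t y)

theorem insertCoord_same (i : Fin (n + 1)) (t : ℝ) (y : Fin n → ℝ) :
    insertCoord i t y i = t := by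
  simp [insertCoord]

theorem insertCoord_succAbove (i : Fin (n + 1)) (t : ℝ) (y : Fin n → ℝ) (j : Fin n) :
    insertCoord i t y (i.succAbove j) = y j := by
  simp [insertCoord]

theorem insertCoord_eq_add_smul (i : Fin (n + 1)) (t : ℝ) (y : Fin n → ℝ) :
    insertCoord i t y = insertCoord i 0 y + t • EuclideanSpace.single i 1 := by
  ext j
  rcases eq_or_ne j i with rfl | hj
  · simp [insertCoord_same]
  · obtain ⟨k, rfl⟩ := Fin.exists_succAbove_eq hj
    simp [insertCoord_succAbove, hj]

theorem hasDerivAt_insertCoord (i : Fin (n + 1)) (t : ℝ) (y : Fin n → ℝ) :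
    HasDerivAt (insertCoord i · y) (EuclideanSpace.single i 1) t := by
  rw [show (insertCoord i · y) = fun t => insertCoord i 0 y + t • EuclideanSpace.single i 1 from
    funext (insertCoord_eq_add_smul i · y)]
  simpa using ((hasDerivAt_id t).smul_const (EuclideanSpace.single i (1 : ℝ))).const_add
    (insertCoord i 0 y)

theorem continuous_insertCoord (i : Fin (n + 1)) (y : Fin n → ℝ) :
    Continuous (insertCoord i · y) :=
  continuous_iff_continuousAt.2 fun t => (hasDerivAt_insertCoord i t y).continuousAt

theorem dist_insertCoord_insertCoord (i : Fin (n + 1)) (s t : ℝ) (y : Fin n → ℝ) :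
    dist (insertCoord i s y) (insertCoord i t y) = dist s t := by
  rw [insertCoord_eq_add_smul i s, insertCoord_eq_add_smul i t, dist_add_left, dist_eq_norm,
    ← sub_smul, norm_smul, PiLp.norm_single, norm_one, mul_one, Real.dist_eq, Real.norm_eq_abs]

noncomputable def transverseSqDist (i : Fin (n + 1)) (x₀ : EuclideanSpace ℝ (Fin (n + 1)))
    (y : Fin n → ℝ) : ℝ :=
  ∑ j, (y j - x₀ (i.succAbove j)) ^ 2

theorem dist_insertCoord_sq (i : Fin (n + 1)) (x₀ : EuclideanSpace ℝ (Fin (n + 1))) (t : ℝ)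
    (y : Fin n → ℝ) :
    dist (insertCoord i t y) x₀ ^ 2 = (t - x₀ i) ^ 2 + transverseSqDist i x₀ y := by
  rw [EuclideanSpace.dist_eq, Real.sq_sqrt (by positivity), Fin.sum_univ_succAbove _ i]
  simp [insertCoord_same, insertCoord_succAbove, transverseSqDist, Real.dist_eq, sq_abs]

/-- The line `insertCoord i · y` meets `ball x₀ R` in the chord `x₀ i ± chordHalf i x₀ R y`;
when the line misses the ball, `Real.sqrt` of the negative radicand makes `chordHalf` zero. -/
noncomputable def chordHalf (i : Fin (n + 1)) (x₀ : EuclideanSpace ℝ (Fin (n + 1))) (R : ℝ)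
    (y : Fin n → ℝ) : ℝ :=
  √(R ^ 2 - transverseSqDist i x₀ y)

theorem chordHalf_nonneg (i : Fin (n + 1)) (x₀ : EuclideanSpace ℝ (Fin (n + 1))) (R : ℝ)
    (y : Fin n → ℝ) : 0 ≤ chordHalf i x₀ R y :=
  Real.sqrt_nonneg _

variable {i : Fin (n + 1)} {x₀ : EuclideanSpace ℝ (Fin (n + 1))} {R : ℝ}

theorem sq_chordHalf {y : Fin n → ℝ} (hs : 0 < chordHalf i x₀ R y) :
    chordHalf i x₀ R y ^ 2 = R ^ 2 - transverseSqDist i x₀ y :=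
  Real.sq_sqrt (Real.sqrt_pos.1 hs).le

theorem insertCoord_mem_ball_iff (hR : 0 < R) (t : ℝ) (y : Fin n → ℝ) :
    insertCoord i t y ∈ Metric.ball x₀ R ↔
      t ∈ Ioo (x₀ i - chordHalf i x₀ R y) (x₀ i + chordHalf i x₀ R y) := by
  rw [Metric.mem_ball, ← pow_lt_pow_iff_left₀ dist_nonneg hR.le two_ne_zero, dist_insertCoord_sq,
    ← lt_sub_iff_add_lt, ← sq_abs, ← Real.lt_sqrt (abs_nonneg _), abs_sub_lt_iff, mem_Ioo,
    chordHalf]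
  constructor <;> rintro ⟨h₁, h₂⟩ <;> constructor <;> linarith

theorem mapsTo_insertCoord_Icc_chord (hR : 0 ≤ R) {y : Fin n → ℝ}
    (hs : 0 < chordHalf i x₀ R y) :
    MapsTo (insertCoord i · y) (Icc (x₀ i - chordHalf i x₀ R y) (x₀ i + chordHalf i x₀ R y))
      (Metric.closedBall x₀ R) := fun t ht => by
  rw [Metric.mem_closedBall, ← pow_le_pow_iff_left₀ dist_nonneg hR two_ne_zero,
    dist_insertCoord_sq, ← le_sub_iff_add_le, ← sq_chordHalf hs]
  exact sq_le_sq' (by linarith [ht.1]) (by linarith [ht.2])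

theorem insertCoord_mem_sphere (hR : 0 ≤ R) {y : Fin n → ℝ} (hs : 0 < chordHalf i x₀ R y)
    {t : ℝ} (ht : (t - x₀ i) ^ 2 = chordHalf i x₀ R y ^ 2) :
    insertCoord i t y ∈ Metric.sphere x₀ R := by
  rw [Metric.mem_sphere, ← sq_eq_sq₀ dist_nonneg hR, dist_insertCoord_sq, ht, sq_chordHalf hs,
    sub_add_cancel]

theorem setIntegral_ball_eq_integral_chord (i : Fin (n + 1)) (hR : 0 < R)
    {G : EuclideanSpace ℝ (Fin (n + 1)) → ℝ} (hG : IntegrableOn G (Metric.ball x₀ R)) :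
    ∫ x in Metric.ball x₀ R, G x =
      ∫ y, ∫ t in (x₀ i - chordHalf i x₀ R y)..(x₀ i + chordHalf i x₀ R y),
        G (insertCoord i t y) := by
  let e := (MeasurableEquiv.piFinSuccAbove (fun _ => ℝ) i).symm.trans
    (MeasurableEquiv.toLp 2 (Fin (n + 1) → ℝ))
  have he : MeasurePreserving e :=
    (EuclideanSpace.volume_preserving_symm_measurableEquiv_toLp (Fin (n + 1))).symm.comp
      (volume_preserving_piFinSuccAbove (fun _ => ℝ) i).symm
  have he_apply : ∀ z, e z = insertCoord i z.1 z.2 := fun _ => rfl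
  set S := e ⁻¹' Metric.ball x₀ R
  have hS : MeasurableSet S := e.measurable measurableSet_ball
  have hGS : Integrable (S.indicator (fun z => G (e z))) (volume.prod volume) := by
    rw [← Measure.volume_eq_prod, integrable_indicator_iff hS]
    exact (he.integrableOn_comp_preimage e.measurableEmbedding).2 hG
  rw [← he.setIntegral_preimage_emb e.measurableEmbedding, ← integral_indicator hS,
    Measure.volume_eq_prod, integral_prod_symm _ hGS]
  refine integral_congr_ae (.of_forall fun y => ?_)
  have hS_fiber : (fun t => S.indicator (fun z => G (e z)) (t, y)) =
      (Ioo (x₀ i - chordHalf i x₀ R y) (x₀ i + chordHalf i x₀ R y)).indicator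
        (fun t => G (insertCoord i t y)) := by
    ext t
    simp only [indicator, S, mem_preimage, he_apply, insertCoord_mem_ball_iff hR]
  simp only [hS_fiber, integral_indicator measurableSet_Ioo, ← integral_Ioc_eq_integral_Ioo]
  rw [intervalIntegral.integral_of_le (by linarith [chordHalf_nonneg i x₀ R y])]

theorem integral_chord_of_forall_segment {P : ℝ → Prop} (hR : 0 ≤ R) {g : ℝ → ℝ}
    (y : Fin n → ℝ) (h₀ : P 0)
    (h : ∀ a b, a < b → MapsTo (insertCoord i · y) (Icc a b) (Metric.closedBall x₀ R) →
      insertCoord i a y ∈ Metric.sphere x₀ R → insertCoord i b y ∈ Metric.sphere x₀ R →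
      P (∫ t in a..b, g t)) :
    P (∫ t in (x₀ i - chordHalf i x₀ R y)..(x₀ i + chordHalf i x₀ R y), g t) := by
  rcases (chordHalf_nonneg i x₀ R y).eq_or_lt with hs | hs
  · rwa [← hs, sub_zero, add_zero, intervalIntegral.integral_same]
  · exact h _ _ (by linarith) (mapsTo_insertCoord_Icc_chord hR hs)
      (insertCoord_mem_sphere hR hs (by ring)) (insertCoord_mem_sphere hR hs (by ring))

end Chord

theorem ContinuousOn.integrableOn_ball {X : Type*} [MetricSpace X] [ProperSpace X]
    [MeasurableSpace X] [OpensMeasurableSpace X] {μ : Measure X} [IsFiniteMeasureOnCompacts μ]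
    {G : X → ℝ} {U : Set X} {x₀ : X} {R : ℝ} (hG : ContinuousOn G U)
    (hU : Metric.closedBall x₀ R ⊆ U) : IntegrableOn G (Metric.ball x₀ R) μ :=
  ((hG.mono hU).integrableOn_compact (isCompact_closedBall x₀ R)).mono_set
    Metric.ball_subset_closedBall

section PartialDeriv

variable {N : ℕ} {u : EuclideanSpace ℝ (Fin N) → ℝ} {U : Set (EuclideanSpace ℝ (Fin N))}

noncomputable def partialDeriv (i : Fin N) (u : EuclideanSpace ℝ (Fin N) → ℝ)
    (x : EuclideanSpace ℝ (Fin N)) : ℝ :=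
  fderiv ℝ u x (EuclideanSpace.single i 1)

theorem lap_eq_sum_partialDeriv (u : EuclideanSpace ℝ (Fin N) → ℝ)
    (x : EuclideanSpace ℝ (Fin N)) : lap u x = ∑ i, partialDeriv i (partialDeriv i u) x :=
  rfl

theorem contDiffOn_partialDeriv {m k : WithTop ℕ∞} (hU : IsOpen U) (hu : ContDiffOn ℝ k u U)
    (hmk : m + 1 ≤ k) (i : Fin N) : ContDiffOn ℝ m (partialDeriv i u) U :=
  (ContinuousLinearMap.apply ℝ ℝ (EuclideanSpace.single i (1 : ℝ))).contDiff.comp_contDiffOn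
    (hu.fderiv_of_isOpen hU hmk)

theorem continuousOn_partialDeriv_partialDeriv (hU : IsOpen U) (hu : ContDiffOn ℝ 2 u U)
    (i j : Fin N) : ContinuousOn (partialDeriv j (partialDeriv i u)) U :=
  (contDiffOn_partialDeriv (m := 0) hU
    (contDiffOn_partialDeriv (m := 1) hU hu (by norm_num) i) (by norm_num) j).continuousOn

theorem continuousOn_lap (hU : IsOpen U) (hu : ContDiffOn ℝ 2 u U) :
    ContinuousOn (lap u) U := by
  rw [show lap u = fun x => ∑ i, partialDeriv i (partialDeriv i u) x from
    funext (lap_eq_sum_partialDeriv u)]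
  exact continuousOn_finsetSum _ fun i _ => continuousOn_partialDeriv_partialDeriv hU hu i i

end PartialDeriv

theorem hasDerivAt_comp_insertCoord {n : ℕ} {u : EuclideanSpace ℝ (Fin (n + 1)) → ℝ}
    {U : Set (EuclideanSpace ℝ (Fin (n + 1)))} (hU : IsOpen U) (hu : DifferentiableOn ℝ u U)
    {i : Fin (n + 1)} {t : ℝ} {y : Fin n → ℝ} (ht : insertCoord i t y ∈ U) :
    HasDerivAt (fun s => u (insertCoord i s y)) (partialDeriv i u (insertCoord i t y)) t :=
  ((hu.differentiableAt (hU.mem_nhds ht)).hasFDerivAt).comp_hasDerivAt t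
    (hasDerivAt_insertCoord i t y)

section Ball

variable {n : ℕ} {φ : EuclideanSpace ℝ (Fin (n + 1)) → ℝ}
  {U : Set (EuclideanSpace ℝ (Fin (n + 1)))} {x₀ : EuclideanSpace ℝ (Fin (n + 1))} {R : ℝ}

theorem integral_partialDeriv_sq_eq_neg (hR : 0 < R) (hU : IsOpen U) (hφ : ContDiffOn ℝ 2 φ U)
    (hUx : Metric.closedBall x₀ R ⊆ U) (hφ₀ : ∀ x ∈ Metric.sphere x₀ R, φ x = 0)
    (i : Fin (n + 1)) :
    ∫ x in Metric.ball x₀ R, partialDeriv i φ x ^ 2 =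
      -∫ x in Metric.ball x₀ R, φ x * partialDeriv i (partialDeriv i φ) x := by
  have hφ' : ContDiffOn ℝ 1 (partialDeriv i φ) U := contDiffOn_partialDeriv hU hφ (by norm_num) i
  have hφ'' := continuousOn_partialDeriv_partialDeriv hU hφ i i
  have hint₁ : IntegrableOn (fun x => φ x * partialDeriv i (partialDeriv i φ) x)
      (Metric.ball x₀ R) := (hφ.continuousOn.mul hφ'').integrableOn_ball hUx
  have hint₂ : IntegrableOn (fun x => partialDeriv i φ x ^ 2) (Metric.ball x₀ R) :=
    (hφ'.continuousOn.pow 2).integrableOn_ball hUx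
  have hsum : ∫ x in Metric.ball x₀ R,
      (φ x * partialDeriv i (partialDeriv i φ) x + partialDeriv i φ x ^ 2) = 0 := by
    rw [setIntegral_ball_eq_integral_chord i hR (hint₁.fun_add hint₂)]
    refine (integral_congr_ae (.of_forall fun y => ?_)).trans (integral_zero _ _)
    refine integral_chord_of_forall_segment (P := (· = 0)) hR.le y rfl
      fun a b hab hmaps ha hb => ?_
    have hmapsU := hmaps.mono_right hUx
    have hline : ContinuousOn (insertCoord i · y) (Icc a b) :=
      (continuous_insertCoord i y).continuousOn
    have hIBP := integral_mul_deriv_deriv_eq_neg_integral_sq hab.le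
      (fun t ht => hasDerivAt_comp_insertCoord hU (hφ.differentiableOn (by norm_num))
        (hmapsU ht))
      (fun t ht => hasDerivAt_comp_insertCoord hU (hφ'.differentiableOn one_ne_zero) (hmapsU ht))
      (hφ''.comp hline hmapsU) (hφ₀ _ ha) (hφ₀ _ hb)
    rw [intervalIntegral.integral_add, hIBP, neg_add_cancel]
    · exact ((hφ.continuousOn.comp hline hmapsU).mul (hφ''.comp hline hmapsU))
        |>.intervalIntegrable_of_Icc hab.le
    · exact ((hφ'.continuousOn.comp hline hmapsU).pow 2).intervalIntegrable_of_Icc hab.le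
  rw [integral_add hint₁ hint₂] at hsum
  linarith

theorem integral_sq_le_partialDeriv_sq (hR : 0 < R) (hU : IsOpen U) (hφ : ContDiffOn ℝ 1 φ U)
    (hUx : Metric.closedBall x₀ R ⊆ U) (hφ₀ : ∀ x ∈ Metric.sphere x₀ R, φ x = 0)
    (i : Fin (n + 1)) :
    ∫ x in Metric.ball x₀ R, φ x ^ 2 ≤
      16 * R ^ 2 * ∫ x in Metric.ball x₀ R, partialDeriv i φ x ^ 2 := by
  have hφ' : ContinuousOn (partialDeriv i φ) U :=
    (contDiffOn_partialDeriv (m := 0) hU hφ le_rfl i).continuousOn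
  have hint₁ : IntegrableOn (fun x => 16 * R ^ 2 * partialDeriv i φ x ^ 2) (Metric.ball x₀ R) :=
    (continuousOn_const.mul (hφ'.pow 2)).integrableOn_ball hUx
  have hint₂ : IntegrableOn (fun x => φ x ^ 2) (Metric.ball x₀ R) :=
    (hφ.continuousOn.pow 2).integrableOn_ball hUx
  have hdiff : 0 ≤ ∫ x in Metric.ball x₀ R,
      (16 * R ^ 2 * partialDeriv i φ x ^ 2 - φ x ^ 2) := by
    rw [setIntegral_ball_eq_integral_chord i hR (hint₁.fun_sub hint₂)]
    refine integral_nonneg fun y => ?_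
    refine integral_chord_of_forall_segment (P := (0 ≤ ·)) hR.le y le_rfl
      fun a b hab hmaps ha hb => ?_
    have hmapsU := hmaps.mono_right hUx
    have hline : ContinuousOn (insertCoord i · y) (Icc a b) :=
      (continuous_insertCoord i y).continuousOn
    have hpoinc := integral_sq_le_of_hasDerivAt hab.le
      (fun t ht => hasDerivAt_comp_insertCoord hU (hφ.differentiableOn one_ne_zero) (hmapsU ht))
      (hφ'.comp hline hmapsU) (hφ₀ _ hb)
    have hba : b - a ≤ 2 * R := by
      have := dist_triangle_right (insertCoord i b y) (insertCoord i a y) x₀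
      rw [dist_insertCoord_insertCoord, Real.dist_eq, abs_of_pos (sub_pos.2 hab),
        Metric.mem_sphere.1 ha, Metric.mem_sphere.1 hb] at this
      linarith
    have hnonneg : 0 ≤ ∫ t in a..b, partialDeriv i φ (insertCoord i t y) ^ 2 :=
      intervalIntegral.integral_nonneg hab.le fun t _ => sq_nonneg _
    rw [intervalIntegral.integral_sub, intervalIntegral.integral_const_mul, sub_nonneg]
    · exact hpoinc.trans (mul_le_mul_of_nonneg_right (by nlinarith) hnonneg)
    · exact (continuousOn_const.mul ((hφ'.comp hline hmapsU).pow 2)).intervalIntegrable_of_Icc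
        hab.le
    · exact ((hφ.continuousOn.comp hline hmapsU).pow 2).intervalIntegrable_of_Icc hab.le
  rw [integral_sub hint₁ hint₂, integral_const_mul, sub_nonneg] at hdiff
  exact hdiff

theorem sum_integral_partialDeriv_sq_eq_neg (hR : 0 < R) (hU : IsOpen U)
    (hφ : ContDiffOn ℝ 2 φ U) (hUx : Metric.closedBall x₀ R ⊆ U)
    (hφ₀ : ∀ x ∈ Metric.sphere x₀ R, φ x = 0) :
    ∑ i, ∫ x in Metric.ball x₀ R, partialDeriv i φ x ^ 2 =
      -∫ x in Metric.ball x₀ R, φ x * lap φ x := by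
  simp_rw [integral_partialDeriv_sq_eq_neg hR hU hφ hUx hφ₀, lap_eq_sum_partialDeriv,
    Finset.mul_sum, Finset.sum_neg_distrib]
  rw [integral_finsetSum (f := fun i x => φ x * partialDeriv i (partialDeriv i φ) x) _
    fun i _ => (hφ.continuousOn.mul
      (continuousOn_partialDeriv_partialDeriv hU hφ i i)).integrableOn_ball hUx]

theorem integral_sq_le_integral_lap_sq (hR : 0 < R) (hU : IsOpen U) (hφ : ContDiffOn ℝ 2 φ U)
    (hUx : Metric.closedBall x₀ R ⊆ U) (hφ₀ : ∀ x ∈ Metric.sphere x₀ R, φ x = 0) :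
    ∫ x in Metric.ball x₀ R, φ x ^ 2 ≤
      (16 * R ^ 2) ^ 2 * ∫ x in Metric.ball x₀ R, lap φ x ^ 2 := by
  have hlap := continuousOn_lap hU hφ
  have hdir : ∫ x in Metric.ball x₀ R, partialDeriv 0 φ x ^ 2 ≤
      ∑ i, ∫ x in Metric.ball x₀ R, partialDeriv i φ x ^ 2 :=
    Finset.single_le_sum (f := fun i => ∫ x in Metric.ball x₀ R, partialDeriv i φ x ^ 2)
      (fun i _ => setIntegral_nonneg measurableSet_ball fun x _ => sq_nonneg _)
      (Finset.mem_univ 0)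
  have hmain : ∫ x in Metric.ball x₀ R, φ x ^ 2 ≤
      -∫ x in Metric.ball x₀ R, φ x * (16 * R ^ 2 * lap φ x) := by
    calc ∫ x in Metric.ball x₀ R, φ x ^ 2
        ≤ 16 * R ^ 2 * ∫ x in Metric.ball x₀ R, partialDeriv 0 φ x ^ 2 :=
          integral_sq_le_partialDeriv_sq hR hU (hφ.of_le one_le_two) hUx hφ₀ 0
      _ ≤ 16 * R ^ 2 * -∫ x in Metric.ball x₀ R, φ x * lap φ x := by
          rw [← sum_integral_partialDeriv_sq_eq_neg hR hU hφ hUx hφ₀]; gcongr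
      _ = -∫ x in Metric.ball x₀ R, φ x * (16 * R ^ 2 * lap φ x) := by
          simp_rw [mul_left_comm (φ _), integral_const_mul, mul_neg]
  calc ∫ x in Metric.ball x₀ R, φ x ^ 2
      ≤ ∫ x in Metric.ball x₀ R, (16 * R ^ 2 * lap φ x) ^ 2 :=
        integral_sq_le_of_le_neg_integral_mul ((hφ.continuousOn.pow 2).integrableOn_ball hUx)
          ((by fun_prop : ContinuousOn (fun x => (16 * R ^ 2 * lap φ x) ^ 2) U).integrableOn_ball
            hUx) hmain
    _ = (16 * R ^ 2) ^ 2 * ∫ x in Metric.ball x₀ R, lap φ x ^ 2 := by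
        simp_rw [mul_pow, integral_const_mul]

end Ball

theorem stmt_15 (N : ℕ) (hN : 1 ≤ N) (x₀ : EuclideanSpace ℝ (Fin N)) (R : ℝ)
    (hR : 0 < R) (Ω : Set (EuclideanSpace ℝ (Fin N)))
    (hΩ : Ω = Metric.ball x₀ R) :
    ∃ c : ℝ, 0 < c ∧
      ∀ φ : EuclideanSpace ℝ (Fin N) → ℝ,
        (∃ U : Set (EuclideanSpace ℝ (Fin N)),
          IsOpen U ∧ closure Ω ⊆ U ∧ ContDiffOn ℝ 2 φ U) →
        (∀ x ∈ frontier Ω, φ x = 0) →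
        ∫ x in Ω, φ x ^ 2 ≤ c * ∫ x in Ω, (lap φ x) ^ 2 := by
  subst hΩ
  obtain ⟨n, rfl⟩ : ∃ n, N = n + 1 := ⟨N - 1, by omega⟩
  refine ⟨(16 * R ^ 2) ^ 2, by positivity, fun φ ⟨U, hU, hUx, hφ⟩ hφ₀ => ?_⟩
  rw [closure_ball x₀ hR.ne'] at hUx
  rw [frontier_ball x₀ hR.ne'] at hφ₀
  exact integral_sq_le_integral_lap_sq hR hU hφ hUx hφ₀
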